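/- If there exists a positive definite matrix D with D·A + Aᵀ·D negative definite, then every eigenvalue of A has strictly negative real part; in particular A is invertible. -/

import Mathlib

/-!
If `A v = μ v` with `v ≠ 0` in `ℂⁿ`, then `v* (D A + Aᵀ D) v = (μ + μ̄) v* D v = 2 Re μ · v* D v`.
For a real matrix `M`, the real part of `v* M v` is `xᵀ M x + yᵀ M y` where `v = x + i y`, so
real definiteness passes to the Hermitian forms: the left side has negative real part and
`v* D v` has positive real part, whence `Re μ < 0`. A real kernel vector of `A` would likewise
make the form vanish, so `A` is invertible.
-/

open Matrix

namespace Matrix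

variable {ι : Type*} [Fintype ι]

theorem exists_mulVec_eq_smul_of_mem_spectrum {K : Type*} [Field K] [DecidableEq ι]
    {B : Matrix ι ι K} {μ : K} (hμ : μ ∈ spectrum K B) : ∃ v ≠ 0, B *ᵥ v = μ • v := by
  rw [← AlgEquiv.spectrum_eq (toLinAlgEquiv' (R := K) (n := ι)),
    ← Module.End.hasEigenvalue_iff_mem_spectrum] at hμ
  obtain ⟨v, hv⟩ := hμ.exists_hasEigenvector
  exact ⟨v, hv.2, by simpa [toLinAlgEquiv'_apply] using hv.apply_eq_smul⟩

theorem star_dotProduct_mul_add_conjTranspose_mul_mulVec {R : Type*} [CommSemiring R]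
    [StarRing R] {B : Matrix ι ι R} {μ : R} {v : ι → R} (hv : B *ᵥ v = μ • v)
    (C : Matrix ι ι R) :
    star v ⬝ᵥ (C * B + Bᴴ * C) *ᵥ v = (μ + star μ) * (star v ⬝ᵥ C *ᵥ v) := by
  rw [add_mulVec, dotProduct_add, ← mulVec_mulVec, ← mulVec_mulVec, hv, mulVec_smul,
    dotProduct_smul, dotProduct_mulVec (star v) Bᴴ, ← star_mulVec, hv, star_smul,
    smul_dotProduct, smul_eq_mul, smul_eq_mul]
  ring

theorem map_ofReal_mul_add_transpose_mul (A D : Matrix ι ι ℝ) :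
    (D * A + Aᵀ * D).map Complex.ofReal
      = D.map Complex.ofReal * A.map Complex.ofReal
        + (A.map Complex.ofReal)ᴴ * D.map Complex.ofReal := by
  ext i j
  simp [mul_apply]

theorem re_star_dotProduct_map_ofReal_mulVec (M : Matrix ι ι ℝ) (v : ι → ℂ) :
    (star v ⬝ᵥ M.map Complex.ofReal *ᵥ v).re
      = (fun i => (v i).re) ⬝ᵥ M *ᵥ (fun i => (v i).re)
        + (fun i => (v i).im) ⬝ᵥ M *ᵥ (fun i => (v i).im) := by
  simp only [dotProduct, mulVec, Pi.star_apply, map_apply, Finset.mul_sum, Complex.re_sum,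
    ← Finset.sum_add_distrib]
  refine Finset.sum_congr rfl fun i _ => Finset.sum_congr rfl fun j _ => ?_
  simp [Complex.mul_re]

theorem re_star_dotProduct_map_ofReal_mulVec_pos {M : Matrix ι ι ℝ}
    (hM : ∀ x ≠ 0, 0 < x ⬝ᵥ M *ᵥ x) {v : ι → ℂ} (hv : v ≠ 0) :
    0 < (star v ⬝ᵥ M.map Complex.ofReal *ᵥ v).re := by
  have hM_nonneg (x : ι → ℝ) : 0 ≤ x ⬝ᵥ M *ᵥ x := by
    rcases eq_or_ne x 0 with rfl | hx
    · simp
    · exact (hM x hx).le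
  have hre_or_im : (fun i => (v i).re) ≠ 0 ∨ (fun i => (v i).im) ≠ 0 := by
    contrapose! hv
    exact funext fun i => Complex.ext (congrFun hv.1 i) (congrFun hv.2 i)
  rw [re_star_dotProduct_map_ofReal_mulVec]
  rcases hre_or_im with hre | him
  · linarith [hM _ hre, hM_nonneg fun i => (v i).im]
  · linarith [hM _ him, hM_nonneg fun i => (v i).re]

variable [DecidableEq ι] {A D : Matrix ι ι ℝ}

theorem re_neg_of_mem_spectrum_of_lyapunov (hD : D.PosDef)
    (hneg : ∀ x ≠ 0, x ⬝ᵥ (D * A + Aᵀ * D) *ᵥ x < 0) {μ : ℂ}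
    (hμ : μ ∈ spectrum ℂ (A.map Complex.ofReal)) : μ.re < 0 := by
  obtain ⟨v, hv0, hAv⟩ := exists_mulVec_eq_smul_of_mem_spectrum hμ
  have hD_form : 0 < (star v ⬝ᵥ D.map Complex.ofReal *ᵥ v).re :=
    re_star_dotProduct_map_ofReal_mulVec_pos
      (fun x hx => by simpa using hD.dotProduct_mulVec_pos hx) hv0
  have hL_form : 0 < (star v ⬝ᵥ (-(D * A + Aᵀ * D)).map Complex.ofReal *ᵥ v).re :=
    re_star_dotProduct_map_ofReal_mulVec_pos
      (fun x hx => by simpa only [neg_mulVec, dotProduct_neg, neg_pos] using hneg x hx) hv0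
  rw [Matrix.map_neg _ Complex.ofReal_neg, map_ofReal_mul_add_transpose_mul, neg_mulVec,
    dotProduct_neg, star_dotProduct_mul_add_conjTranspose_mul_mulVec hAv, Complex.star_def,
    Complex.add_conj, Complex.neg_re,
    Complex.re_ofReal_mul, neg_pos] at hL_form
  nlinarith

theorem isUnit_of_lyapunov (hneg : ∀ x ≠ 0, x ⬝ᵥ (D * A + Aᵀ * D) *ᵥ x < 0) : IsUnit A := by
  rw [isUnit_iff_isUnit_det, isUnit_iff_ne_zero, Ne, ← exists_mulVec_eq_zero_iff]
  rintro ⟨x, hx0, hAx⟩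
  have hform := star_dotProduct_mul_add_conjTranspose_mul_mulVec (μ := 0)
    (by rwa [zero_smul]) D
  simp only [star_trivial, conjTranspose_eq_transpose_of_trivial, add_zero, zero_mul] at hform
  exact (hneg x hx0).ne hform

end Matrix

/-- If there exists a positive definite `D` with `D·A + Aᵀ·D` negative definite,
then every eigenvalue of `A` (over `ℂ`) has strictly negative real part; in
particular `A` is invertible. -/
theorem lyapunov_spectrum_neg_re {n : ℕ}
    (A D : Matrix (Fin n) (Fin n) ℝ) (hD : D.PosDef)
    (hneg : ∀ x : Fin n → ℝ, x ≠ 0 → x ⬝ᵥ (D * A + Aᵀ * D).mulVec x < 0) :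
    (∀ μ ∈ spectrum ℂ (A.map Complex.ofReal), μ.re < 0) ∧ IsUnit A :=
  ⟨fun _ hμ => re_neg_of_mem_spectrum_of_lyapunov hD hneg hμ, isUnit_of_lyapunov hneg⟩
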